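/- Consider a discrete-time affine set-valued recursion: suppose matrices A(t), B(t) and zonotopes W(t) = Z(d(t), G_w(t)) are given, and parameters x̄_t, ū_t, T_t, M_t satisfy [A(t)T_t + B(t)M_t, G_w(t)] = T_{t+1} and A(t)x̄_t + B(t)ū_t + d(t) = x̄_{t+1} for all t < h. Define Ω(t) = Z(x̄_t, T_t), Θ(t) = Z(ū_t, M_t) and the controller that maps x = x̄_t + T_t ζ to u = ū_t + M_t ζ. Then for every t < h, every x(t) ∈ Ω(t) of the form x̄_t + T_t ζ with ‖ζ‖_∞ ≤ 1, and every w(t) ∈ W(t), the successor x(t+1) = A(t)x(t) + B(t)u(t) + w(t) with u(t) = ū_t + M_t ζ lies in Ω(t+1), and u(t) ∈ Θ(t). -/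

import Mathlib

/-! Under the controller the successor is `(A x̄ + B ū) + (A T + B M) ζ + w`, a point of the
Minkowski sum `Z(A x̄ + B ū, A T + B M) + Z(d, G_w)`. A Minkowski sum of zonotopes is the zonotope
with the summed centres and the concatenated generators, and relabelling generators does not change
a zonotope, so the constraints (17a)-(17b) say exactly that this sum is `Ω(t+1)`. -/

/-- The zonotope `Z(c,G) = {c + G b : ‖b‖_∞ ≤ 1}`. -/
def zono {n : ℕ} {ι : Type*} [Fintype ι] (c : Fin n → ℝ)
    (G : Matrix (Fin n) ι ℝ) : Set (Fin n → ℝ) :=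
  {x | ∃ b : ι → ℝ, (∀ i, |b i| ≤ 1) ∧ x = c + G.mulVec b}

open Matrix

section Zonotope

variable {n : ℕ} {ι κ : Type*} [Fintype ι] [Fintype κ]

theorem add_mulVec_mem_zono (c : Fin n → ℝ) (G : Matrix (Fin n) ι ℝ) {b : ι → ℝ}
    (hb : ∀ i, |b i| ≤ 1) : c + G *ᵥ b ∈ zono c G :=
  ⟨b, hb, rfl⟩

theorem zono_submatrix_equiv (c : Fin n → ℝ) (G : Matrix (Fin n) ι ℝ) (e : κ ≃ ι) :
    zono c (G.submatrix id e) = zono c G := by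
  ext x
  constructor
  · rintro ⟨b, hb, rfl⟩
    exact ⟨b ∘ e.symm, fun i => hb _, by rw [submatrix_mulVec_equiv, Function.comp_id]⟩
  · rintro ⟨b, hb, rfl⟩
    refine ⟨b ∘ e, fun i => hb _, ?_⟩
    rw [submatrix_mulVec_equiv, Function.comp_id, Function.comp_assoc, e.self_comp_symm,
      Function.comp_id]

theorem zono_reindex (c : Fin n → ℝ) (G : Matrix (Fin n) ι ℝ) (e : ι ≃ κ) :
    zono c (reindex (Equiv.refl (Fin n)) e G) = zono c G :=
  zono_submatrix_equiv c G e.symm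

open scoped Pointwise in
theorem zono_add_zono (c d : Fin n → ℝ) (G : Matrix (Fin n) ι ℝ) (H : Matrix (Fin n) κ ℝ) :
    zono c G + zono d H = zono (c + d) (fromCols G H) := by
  ext x
  constructor
  · rintro ⟨_, ⟨b, hb, rfl⟩, _, ⟨b', hb', rfl⟩, rfl⟩
    refine ⟨Sum.elim b b', fun i => ?_, ?_⟩
    · cases i with
      | inl i => exact hb i
      | inr i => exact hb' i
    · rw [fromCols_mulVec_sumElim, add_add_add_comm]
  · rintro ⟨b, hb, rfl⟩
    refine ⟨_, ⟨b ∘ Sum.inl, fun i => hb _, rfl⟩, _, ⟨b ∘ Sum.inr, fun i => hb _, rfl⟩, ?_⟩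
    rw [fromCols_mulVec, add_add_add_comm]

end Zonotope

/-- Sufficiency of the linear constraints `[A(t)T_t + B(t)M_t, G_w(t)] = T_{t+1}` and
`A(t)x̄_t + B(t)ū_t + d(t) = x̄_{t+1}` for viability: with `Ω(t) = Z(x̄_t, T_t)`,
`Θ(t) = Z(ū_t, M_t)`, and the controller mapping `x = x̄_t + T_t ζ` to `u = ū_t + M_t ζ`,
every successor `A(t)x(t) + B(t)u(t) + w(t)` with `w(t) ∈ W(t) = Z(d(t), G_w(t))`
lies in `Ω(t+1)`, and `u(t) ∈ Θ(t)`. -/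
theorem viable_sets_sufficiency {n m : ℕ} (h : ℕ) (q l : ℕ → ℕ)
    (hq : ∀ t, q (t + 1) = q t + l t)
    (A : ℕ → Matrix (Fin n) (Fin n) ℝ) (B : ℕ → Matrix (Fin n) (Fin m) ℝ)
    (d : (t : ℕ) → Fin n → ℝ) (Gw : (t : ℕ) → Matrix (Fin n) (Fin (l t)) ℝ)
    (xbar : (t : ℕ) → Fin n → ℝ) (ubar : (t : ℕ) → Fin m → ℝ)
    (T : (t : ℕ) → Matrix (Fin n) (Fin (q t)) ℝ)
    (M : (t : ℕ) → Matrix (Fin m) (Fin (q t)) ℝ)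
    (hT : ∀ t < h, T (t + 1) =
      Matrix.reindex (Equiv.refl (Fin n)) (finSumFinEquiv.trans (finCongr (hq t).symm))
        (Matrix.fromCols (A t * T t + B t * M t) (Gw t)))
    (hx : ∀ t < h, (A t).mulVec (xbar t) + (B t).mulVec (ubar t) + d t = xbar (t + 1)) :
    ∀ t < h, ∀ ζ : Fin (q t) → ℝ, (∀ i, |ζ i| ≤ 1) →
      ∀ w ∈ zono (d t) (Gw t),
        (A t).mulVec (xbar t + (T t).mulVec ζ) +
            (B t).mulVec (ubar t + (M t).mulVec ζ) + w ∈
          zono (xbar (t + 1)) (T (t + 1)) ∧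
        ubar t + (M t).mulVec ζ ∈ zono (ubar t) (M t) := by
  intro t ht ζ hζ w hw
  refine ⟨?_, add_mulVec_mem_zono _ _ hζ⟩
  have hsucc : A t *ᵥ (xbar t + T t *ᵥ ζ) + B t *ᵥ (ubar t + M t *ᵥ ζ) =
      (A t *ᵥ xbar t + B t *ᵥ ubar t) + (A t * T t + B t * M t) *ᵥ ζ := by
    simp only [mulVec_add, add_mulVec, mulVec_mulVec]
    abel
  rw [hT t ht, zono_reindex, ← hx t ht, ← zono_add_zono, hsucc]
  exact Set.add_mem_add (add_mulVec_mem_zono _ _ hζ) hw
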